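/- arXiv:2207.01195 — 7 statements merged into one kernel-verified Lean document; each statement's English description precedes it below -/
import Mathlib

section
/- Define polynomials f_m in a nonassociative algebra recursively by f_1(x) = x, f_2(x₁,x₂) = [x₁,x₂], and f_{m+1}(x₁,…,x_{m+1}) = Σ_{1≤i<j≤m+1} (−1)^{i+j−1} f_m([x_i,x_j], x₁, …, x̌_i, …, x̌_j, …, x_{m+1}), where x̌_k means x_k is omitted. Then for every m ≥ 2 and any algebra A, the multilinear function f_m: A^m → A vanishes whenever two of its arguments coincide (i.e., f_m is alternating). -/
/-- The recursively defined polynomials `f_m`: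
`f 1 x = x 0`, `f 2 x = [x 0, x 1]`, and
`f (m+1) x = ∑_{i<j} (−1)^{i+j−1} f m ([x i, x j], x with the i-th and j-th entries omitted)`
(0-based indices; the sign matches the paper's 1-based `(−1)^{i+j−1}`). -/
def fpoly {A : Type*} [NonUnitalNonAssocRing A] : ∀ m : ℕ, (Fin m → A) → A
  | 0, _ => 0
  | 1, x => x 0
  | m + 2, x =>
      ∑ i : Fin (m + 2), ∑ j : Fin (m + 2),
        if h : i < j then
          ((-1 : ℤ) ^ (i.val + j.val + 1)) •
            fpoly (m + 1)
              (Fin.cons (x i * x j - x j * x i)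
                (fun k : Fin m =>
                  x (i.succAbove ((j.pred (Fin.pos_iff_ne_zero.mp
                      (lt_of_le_of_lt (Fin.zero_le i) h))).succAbove k))))
        else 0


section Aux
variable {A : Type*} [NonUnitalNonAssocRing A]

/-- increasing enumeration of complement of `{i,j}` when `i < j`. -/
def emb {m : ℕ} (i j : Fin (m+2)) (k : Fin m) : Fin (m+2) :=
  if (k:ℕ) < (i:ℕ) then ⟨k, by omega⟩
  else if (k:ℕ)+1 < (j:ℕ) then ⟨(k:ℕ)+1, by omega⟩ else ⟨(k:ℕ)+2, by omega⟩

lemma emb_val {m : ℕ} (i j : Fin (m+2)) (k : Fin m) :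
    ((emb i j k : Fin (m+2)) : ℕ) =
      if (k:ℕ) < (i:ℕ) then (k:ℕ) else if (k:ℕ)+1 < (j:ℕ) then (k:ℕ)+1 else (k:ℕ)+2 := by
  unfold emb; split_ifs <;> rfl

lemma succAbove_val {n : ℕ} (i : Fin (n+1)) (k : Fin n) :
    ((i.succAbove k : Fin (n+1)) : ℕ) = if (k:ℕ) < (i:ℕ) then (k:ℕ) else (k:ℕ)+1 := by
  rw [Fin.succAbove]
  split_ifs with h1 h2 h2
  · rfl
  · exact absurd h1 (by simpa [Fin.lt_def] using h2)
  · exact absurd (by simpa [Fin.lt_def] using h2) h1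
  · rfl

lemma emb_eq {m : ℕ} (i j : Fin (m+2)) (h : i < j) (hne : j ≠ 0) (k : Fin m) :
    i.succAbove ((j.pred hne).succAbove k) = emb i j k := by
  have hij : (i:ℕ) < (j:ℕ) := h
  apply Fin.ext
  rw [succAbove_val, succAbove_val, emb_val, Fin.coe_pred]
  split_ifs <;> omega

def gterm {m : ℕ} (x : Fin (m+2) → A) (i j : Fin (m+2)) : A :=
  if (i:ℕ) < (j:ℕ) then
    ((-1 : ℤ) ^ ((i:ℕ) + (j:ℕ) + 1)) •
      fpoly (m+1) (Fin.cons (x i * x j - x j * x i) (fun k => x (emb i j k)))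
  else 0

lemma fpoly_succ {m : ℕ} (x : Fin (m+2) → A) :
    fpoly (m+2) x = ∑ i : Fin (m+2), ∑ j : Fin (m+2), gterm x i j := by
  rw [fpoly]
  refine Finset.sum_congr rfl fun i _ => Finset.sum_congr rfl fun j _ => ?_
  unfold gterm
  by_cases h : i < j
  · rw [dif_pos h, if_pos (by exact_mod_cast h)]
    have ht : ∀ k : Fin m, x (i.succAbove ((j.pred (Fin.pos_iff_ne_zero.mp
        (lt_of_le_of_lt (Fin.zero_le i) h))).succAbove k)) = x (emb i j k) :=
      fun k => congrArg x (emb_eq i j h _ k)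
    simp only [ht]
  · rw [dif_neg h, if_neg (by exact_mod_cast h)]

lemma emb_injective {m : ℕ} (i j : Fin (m+2)) : Function.Injective (emb i j) := by
  intro a b hab
  have h := congrArg Fin.val hab
  rw [emb_val, emb_val] at h
  apply Fin.ext
  split_ifs at h <;> omega

lemma bracket_neg_left (a b : A) : (-a) * b - b * (-a) = -(a * b - b * a) := by
  rw [neg_mul, mul_neg]; abel

lemma bracket_neg_right (a b : A) : a * (-b) - (-b) * a = -(a * b - b * a) := by
  rw [neg_mul, mul_neg]; abel

lemma fpoly_neg : ∀ (m : ℕ) (x y : Fin m → A) (t : Fin m),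
    (∀ s, s ≠ t → y s = x s) → (y t = - x t) → fpoly m y = - fpoly m x := by
  intro m
  induction m using Nat.strong_induction_on with
  | _ m IH =>
  match m with
  | 0 => intro x y t _ _; exact t.elim0
  | 1 =>
    intro x y t hs ht
    have h0 : t = 0 := Subsingleton.elim _ _
    subst h0
    rw [fpoly, fpoly]; exact ht
  | m+2 =>
    intro x y t hs ht
    rw [fpoly_succ, fpoly_succ, ← Finset.sum_neg_distrib]
    refine Finset.sum_congr rfl fun i _ => ?_
    rw [← Finset.sum_neg_distrib]
    refine Finset.sum_congr rfl fun j _ => ?_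
    unfold gterm
    by_cases hij : (i:ℕ) < (j:ℕ)
    · rw [if_pos hij, if_pos hij, ← smul_neg]
      congr 1
      have hbt := t.isLt
      by_cases hti : t = i
      · subst hti
        apply IH (m+1) (by omega) _ _ 0
        · intro s hs0
          induction s using Fin.cases with
          | zero => exact absurd rfl hs0
          | succ u =>
            rw [Fin.cons_succ, Fin.cons_succ]
            refine hs _ (fun e => ?_)
            have := congrArg Fin.val e
            rw [emb_val] at this
            split_ifs at this <;> omega
        · rw [Fin.cons_zero, Fin.cons_zero, ht,
            hs j (Fin.ne_of_val_ne (by omega)), bracket_neg_left]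
      · by_cases htj : t = j
        · subst htj
          apply IH (m+1) (by omega) _ _ 0
          · intro s hs0
            induction s using Fin.cases with
            | zero => exact absurd rfl hs0
            | succ u =>
              rw [Fin.cons_succ, Fin.cons_succ]
              refine hs _ (fun e => ?_)
              have := congrArg Fin.val e
              rw [emb_val] at this
              split_ifs at this <;> omega
          · rw [Fin.cons_zero, Fin.cons_zero, ht,
              hs i (Fin.ne_of_val_ne (by omega)), bracket_neg_right]
        · have hti' : (t:ℕ) ≠ (i:ℕ) := fun e => hti (Fin.ext e)
          have htj' : (t:ℕ) ≠ (j:ℕ) := fun e => htj (Fin.ext e)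
          have hbi := i.isLt
          have hbj := j.isLt
          obtain ⟨c, hce⟩ : ∃ c : Fin m, emb i j c = t := by
            refine ⟨⟨if (t:ℕ) < (i:ℕ) then (t:ℕ) else if (t:ℕ) < (j:ℕ) then (t:ℕ)-1
              else (t:ℕ)-2, by split_ifs <;> omega⟩, ?_⟩
            apply Fin.ext
            rw [emb_val]
            simp only
            split_ifs <;> omega
          apply IH (m+1) (by omega) _ _ c.succ
          · intro s hs0
            induction s using Fin.cases with
            | zero =>
              rw [Fin.cons_zero, Fin.cons_zero,
                hs i (fun e => hti' (congrArg Fin.val e.symm)),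
                hs j (fun e => htj' (congrArg Fin.val e.symm))]
            | succ u =>
              rw [Fin.cons_succ, Fin.cons_succ]
              refine hs _ (fun e => hs0 ?_)
              rw [← hce] at e
              rw [emb_injective i j e]
          · rw [Fin.cons_succ, Fin.cons_succ, hce, ht]
    · rw [if_neg hij, if_neg hij, neg_zero]

lemma neg_one_pow_pm (a b : ℕ) (h : a = b + 1 ∨ b = a + 1) : ((-1:ℤ))^a = -((-1:ℤ))^b := by
  rcases h with h | h <;> subst h
  · rw [pow_succ]; ring
  · rw [pow_succ]; ring

def sfun {n : ℕ} (k : ℕ) (hk : k + 1 < n) (i : Fin n) : Fin n :=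
  if (i:ℕ) = k then ⟨k+1, hk⟩ else if (i:ℕ) = k+1 then ⟨k, by omega⟩ else i

lemma sfun_val {n : ℕ} (k : ℕ) (hk : k + 1 < n) (i : Fin n) :
    ((sfun k hk i : Fin n) : ℕ) = if (i:ℕ) = k then k+1 else if (i:ℕ) = k+1 then k else (i:ℕ) := by
  unfold sfun; split_ifs <;> rfl

def psi {n : ℕ} (k : ℕ) (hk : k + 1 < n) (p : Fin n × Fin n) : Fin n × Fin n :=
  if ((p.1:ℕ) = k ∧ (p.2:ℕ) = k+1) ∨ ((p.1:ℕ) = k+1 ∧ (p.2:ℕ) = k) then p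
  else (sfun k hk p.1, sfun k hk p.2)

lemma sfun_sfun {n : ℕ} (k : ℕ) (hk : k + 1 < n) (i : Fin n) :
    sfun k hk (sfun k hk i) = i := by
  apply Fin.ext
  rw [sfun_val, sfun_val]
  split_ifs <;> omega

lemma psi_involutive {n : ℕ} (k : ℕ) (hk : k + 1 < n) : Function.Involutive (psi k hk) := by
  rintro ⟨i, j⟩
  by_cases hsp : ((i:ℕ) = k ∧ (j:ℕ) = k+1) ∨ ((i:ℕ) = k+1 ∧ (j:ℕ) = k)
  · have h1 : psi k hk (i, j) = (i, j) := by simp only [psi]; rw [if_pos hsp]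
    rw [h1, h1]
  · simp only [psi, if_neg hsp]
    split_ifs with h
    · rw [sfun_val, sfun_val] at h
      split_ifs at h <;> omega
    · rw [sfun_sfun, sfun_sfun]

set_option maxHeartbeats 1600000 in
lemma fpoly_swap : ∀ (m : ℕ) (x y : Fin m → A) (k : ℕ) (hk : k + 1 < m),
    (∀ s : Fin m, (s:ℕ) ≠ k → (s:ℕ) ≠ k+1 → y s = x s) →
    y ⟨k, by omega⟩ = x ⟨k+1, hk⟩ → y ⟨k+1, hk⟩ = x ⟨k, by omega⟩ →
    fpoly m y = - fpoly m x := by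
  intro m
  induction m using Nat.strong_induction_on with
  | _ m IH =>
  match m with
  | 0 => intro x y k hk _ _ _; omega
  | 1 => intro x y k hk _ _ _; omega
  | m+2 =>
    intro x y k hk hyx h1 h2
    -- swap as a function on entries
    have hsw : ∀ s : Fin (m+2), y (sfun k hk s) = x s := by
      intro s
      by_cases e1 : (s:ℕ) = k
      · have es : sfun k hk s = ⟨k+1, hk⟩ := Fin.ext (by rw [sfun_val, if_pos e1])
        rw [es, h2]; exact congrArg x (Fin.ext e1.symm)
      · by_cases e2 : (s:ℕ) = k+1
        · have es : sfun k hk s = ⟨k, by omega⟩ :=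
            Fin.ext (by rw [sfun_val, if_neg e1, if_pos e2])
          rw [es, h1]; exact congrArg x (Fin.ext e2.symm)
        · have es : sfun k hk s = s := Fin.ext (by rw [sfun_val, if_neg e1, if_neg e2])
          rw [es]; exact hyx s e1 e2
    have key : ∀ p : Fin (m+2) × Fin (m+2),
        -(gterm x p.1 p.2) = gterm y (psi k hk p).1 (psi k hk p).2 := by
      rintro ⟨i, j⟩
      dsimp only
      have hbi := i.isLt
      have hbj := j.isLt
      by_cases hsp : ((i:ℕ) = k ∧ (j:ℕ) = k+1) ∨ ((i:ℕ) = k+1 ∧ (j:ℕ) = k)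
      · have hp : psi k hk (i, j) = (i, j) := by simp only [psi]; rw [if_pos hsp]
        rw [hp]; dsimp only
        rcases hsp with ⟨e1, e2⟩ | ⟨e1, e2⟩
        · -- the pair (k, k+1) itself : bracket gets negated
          have hij : (i:ℕ) < (j:ℕ) := by omega
          unfold gterm
          rw [if_pos hij, if_pos hij]
          have eyi : y i = x j := by
            rw [show i = (⟨k, by omega⟩ : Fin (m+2)) from Fin.ext e1, h1]
            exact congrArg x (Fin.ext e2.symm)
          have eyj : y j = x i := by
            rw [show j = (⟨k+1, hk⟩ : Fin (m+2)) from Fin.ext e2, h2]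
            exact congrArg x (Fin.ext e1.symm)
          have hF : fpoly (m+1) (Fin.cons (y i * y j - y j * y i) (fun t => y (emb i j t)))
              = - fpoly (m+1) (Fin.cons (x i * x j - x j * x i) (fun t => x (emb i j t))) := by
            apply fpoly_neg _ _ _ 0
            · intro s hs0
              induction s using Fin.cases with
              | zero => exact absurd rfl hs0
              | succ u =>
                rw [Fin.cons_succ, Fin.cons_succ]
                have hu := u.isLt
                refine hyx _ ?_ ?_ <;> (rw [emb_val]; split_ifs <;> omega)
            · rw [Fin.cons_zero, Fin.cons_zero, eyi, eyj]
              exact (neg_sub _ _).symm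
          rw [hF, smul_neg]
        · -- the pair (k+1, k) : both sides vanish
          unfold gterm
          rw [if_neg (by omega), if_neg (by omega), neg_zero]
      · have hp : psi k hk (i, j) = (sfun k hk i, sfun k hk j) := by
          simp only [psi]; rw [if_neg hsp]
        rw [hp]; dsimp only
        by_cases hij : (i:ℕ) < (j:ℕ)
        · by_cases hc1 : (i:ℕ) ≠ k ∧ (i:ℕ) ≠ k+1 ∧ (j:ℕ) ≠ k ∧ (j:ℕ) ≠ k+1
          · -- both i and j avoid {k, k+1} : use the induction hypothesis
            obtain ⟨hik, hik1, hjk, hjk1⟩ := hc1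
            have esi : sfun k hk i = i := Fin.ext (by rw [sfun_val, if_neg hik, if_neg hik1])
            have esj : sfun k hk j = j := Fin.ext (by rw [sfun_val, if_neg hjk, if_neg hjk1])
            rw [esi, esj]
            unfold gterm
            rw [if_pos hij, if_pos hij]
            obtain ⟨kc, hkc1, hkc2, hkc3⟩ : ∃ c : ℕ, c + 2 < m + 1 ∧
                (∀ u : Fin m, ((emb i j u : Fin (m+2)):ℕ) = k ↔ (u:ℕ) = c) ∧
                (∀ u : Fin m, ((emb i j u : Fin (m+2)):ℕ) = k+1 ↔ (u:ℕ) = c+1) := by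
              refine ⟨if k < (i:ℕ) then k else if k < (j:ℕ) then k - 1 else k - 2, ?_, ?_, ?_⟩
              · split_ifs <;> omega
              · intro u; have hu := u.isLt; rw [emb_val]; split_ifs <;> omega
              · intro u; have hu := u.isLt; rw [emb_val]; split_ifs <;> omega
            have hF : fpoly (m+1) (Fin.cons (y i * y j - y j * y i) (fun t => y (emb i j t)))
                = - fpoly (m+1) (Fin.cons (x i * x j - x j * x i) (fun t => x (emb i j t))) := by
              apply IH (m+1) (by omega) _ _ (kc+1) (by omega)
              · intro s hs1 hs2
                induction s using Fin.cases with
                | zero =>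
                  rw [Fin.cons_zero, Fin.cons_zero, hyx i hik hik1, hyx j hjk hjk1]
                | succ u =>
                  rw [Fin.cons_succ, Fin.cons_succ]
                  rw [Fin.val_succ] at hs1 hs2
                  refine hyx _ (fun e => hs1 ?_) (fun e => hs2 ?_)
                  · rw [(hkc2 u).mp e]
                  · rw [(hkc3 u).mp e]
              · rw [show (⟨kc+1, by omega⟩ : Fin (m+1)) = Fin.succ ⟨kc, by omega⟩ from rfl,
                  show (⟨kc+1+1, by omega⟩ : Fin (m+1)) = Fin.succ ⟨kc+1, by omega⟩ from rfl,
                  Fin.cons_succ, Fin.cons_succ,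
                  show emb i j ⟨kc, by omega⟩ = (⟨k, by omega⟩ : Fin (m+2)) from
                    Fin.ext ((hkc2 _).mpr rfl),
                  show emb i j ⟨kc+1, by omega⟩ = (⟨k+1, hk⟩ : Fin (m+2)) from
                    Fin.ext ((hkc3 _).mpr rfl), h1]
              · rw [show (⟨kc+1+1, by omega⟩ : Fin (m+1)) = Fin.succ ⟨kc+1, by omega⟩ from rfl,
                  show (⟨kc+1, by omega⟩ : Fin (m+1)) = Fin.succ ⟨kc, by omega⟩ from rfl,
                  Fin.cons_succ, Fin.cons_succ,
                  show emb i j ⟨kc+1, by omega⟩ = (⟨k+1, hk⟩ : Fin (m+2)) from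
                    Fin.ext ((hkc3 _).mpr rfl),
                  show emb i j ⟨kc, by omega⟩ = (⟨k, by omega⟩ : Fin (m+2)) from
                    Fin.ext ((hkc2 _).mpr rfl), h2]
            rw [hF, smul_neg]
          · -- one of i, j lies in {k, k+1} : sign flips, tuples match up
            have hemb : ∀ u : Fin m,
                emb (sfun k hk i) (sfun k hk j) u = sfun k hk (emb i j u) := by
              intro u
              have hu := u.isLt
              apply Fin.ext
              simp only [emb_val, sfun_val]
              split_ifs <;> omega
            have hlt : ((sfun k hk i : Fin (m+2)):ℕ) < ((sfun k hk j : Fin (m+2)):ℕ) := by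
              rw [sfun_val, sfun_val]; split_ifs <;> omega
            unfold gterm
            rw [if_pos hlt, if_pos hij]
            have hsign : ((-1:ℤ))^(((sfun k hk i : Fin (m+2)):ℕ) + ((sfun k hk j : Fin (m+2)):ℕ) + 1)
                = -((-1:ℤ))^((i:ℕ) + (j:ℕ) + 1) := by
              apply neg_one_pow_pm
              rw [sfun_val, sfun_val]
              split_ifs <;> omega
            have hF : (Fin.cons (y (sfun k hk i) * y (sfun k hk j) - y (sfun k hk j) * y (sfun k hk i))
                  (fun t => y (emb (sfun k hk i) (sfun k hk j) t)) : Fin (m+1) → A)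
                = (Fin.cons (x i * x j - x j * x i) (fun t => x (emb i j t)) : Fin (m+1) → A) := by
              funext s
              induction s using Fin.cases with
              | zero => rw [Fin.cons_zero, Fin.cons_zero, hsw i, hsw j]
              | succ u => rw [Fin.cons_succ, Fin.cons_succ, hemb u, hsw]
            rw [hF, hsign, neg_smul]
        · -- i ≥ j : both terms vanish
          unfold gterm
          rw [if_neg hij, if_neg (by rw [sfun_val, sfun_val]; split_ifs <;> omega), neg_zero]
    have hy : (∑ i : Fin (m+2), ∑ j : Fin (m+2), gterm y i j)
        = ∑ p : Fin (m+2) × Fin (m+2), gterm y p.1 p.2 := by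
      rw [← Finset.sum_product', Finset.univ_product_univ]
    have hx : (∑ i : Fin (m+2), ∑ j : Fin (m+2), gterm x i j)
        = ∑ p : Fin (m+2) × Fin (m+2), gterm x p.1 p.2 := by
      rw [← Finset.sum_product', Finset.univ_product_univ]
    rw [fpoly_succ, fpoly_succ, hy, hx, ← Finset.sum_neg_distrib]
    exact (Fintype.sum_bijective _ (psi_involutive k hk).bijective _ _ key).symm

lemma fpoly_aux (F : Type*) [Field F] (hchar : (2 : F) ≠ 0)
    [Module F A] : ∀ (d m : ℕ) (x : Fin m → A) (i j : Fin m),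
    (i:ℕ) < (j:ℕ) → (j:ℕ) - (i:ℕ) = d + 1 → x i = x j → fpoly m x = 0 := by
  intro d
  induction d with
  | zero =>
    intro m x i j hij hd hx
    have hbj := j.isLt
    have hk : (i:ℕ) + 1 < m := by first | omega | (simp only [Fin.val_mk]; try omega)
    have hswap := fpoly_swap m x x (i:ℕ) hk (fun s _ _ => rfl)
      (by
        rw [show (⟨(i:ℕ), by first | omega | (simp only [Fin.val_mk]; try omega)⟩ : Fin m) = i from Fin.ext rfl,
          show (⟨(i:ℕ)+1, hk⟩ : Fin m) = j from Fin.ext (by first | omega | (simp only [Fin.val_mk]; try omega))]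
        exact hx)
      (by
        rw [show (⟨(i:ℕ), by first | omega | (simp only [Fin.val_mk]; try omega)⟩ : Fin m) = i from Fin.ext rfl,
          show (⟨(i:ℕ)+1, hk⟩ : Fin m) = j from Fin.ext (by first | omega | (simp only [Fin.val_mk]; try omega))]
        exact hx.symm)
    have h2s : (2 : F) • fpoly m x = 0 := by
      rw [two_smul]
      nth_rewrite 1 [hswap]
      exact neg_add_cancel _
    calc fpoly m x = (2:F)⁻¹ • ((2:F) • fpoly m x) := (inv_smul_smul₀ hchar _).symm
      _ = 0 := by rw [h2s, smul_zero]
  | succ d IHd =>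
    intro m x i j hij hd hx
    have hbj := j.isLt
    have hbi := i.isLt
    have hswap := fpoly_swap m x
      (fun s => if (s:ℕ) = (j:ℕ)-1 then x j
        else if (s:ℕ) = (j:ℕ) then x ⟨(j:ℕ)-1, by first | omega | (simp only [Fin.val_mk]; try omega)⟩ else x s)
      ((j:ℕ)-1) (by first | omega | (simp only [Fin.val_mk]; try omega))
      (by
        intro s hs1 hs2
        show (if (s:ℕ) = (j:ℕ)-1 then x j
          else if (s:ℕ) = (j:ℕ) then x ⟨(j:ℕ)-1, by first | omega | (simp only [Fin.val_mk]; try omega)⟩ else x s) = x s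
        rw [if_neg hs1, if_neg (by first | omega | (simp only [Fin.val_mk]; try omega))])
      (by
        show (if (((⟨(j:ℕ)-1, by first | omega | (simp only [Fin.val_mk]; try omega)⟩ : Fin m)):ℕ) = (j:ℕ)-1 then x j
          else if (((⟨(j:ℕ)-1, by first | omega | (simp only [Fin.val_mk]; try omega)⟩ : Fin m)):ℕ) = (j:ℕ) then x ⟨(j:ℕ)-1, by first | omega | (simp only [Fin.val_mk]; try omega)⟩
          else x ⟨(j:ℕ)-1, by first | omega | (simp only [Fin.val_mk]; try omega)⟩) = x ⟨(j:ℕ)-1+1, by first | omega | (simp only [Fin.val_mk]; try omega)⟩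
        rw [if_pos rfl]
        exact congrArg x (Fin.ext (by first | omega | (simp only [Fin.val_mk]; try omega))))
      (by
        show (if (((⟨(j:ℕ)-1+1, by first | omega | (simp only [Fin.val_mk]; try omega)⟩ : Fin m)):ℕ) = (j:ℕ)-1 then x j
          else if (((⟨(j:ℕ)-1+1, by first | omega | (simp only [Fin.val_mk]; try omega)⟩ : Fin m)):ℕ) = (j:ℕ) then x ⟨(j:ℕ)-1, by first | omega | (simp only [Fin.val_mk]; try omega)⟩
          else x ⟨(j:ℕ)-1+1, by first | omega | (simp only [Fin.val_mk]; try omega)⟩) = x ⟨(j:ℕ)-1, by first | omega | (simp only [Fin.val_mk]; try omega)⟩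
        rw [if_neg (by first | omega | (simp only [Fin.val_mk]; try omega)), if_pos (by first | omega | (simp only [Fin.val_mk]; try omega))])
    have hzero : fpoly m (fun s => if (s:ℕ) = (j:ℕ)-1 then x j
        else if (s:ℕ) = (j:ℕ) then x ⟨(j:ℕ)-1, by first | omega | (simp only [Fin.val_mk]; try omega)⟩ else x s) = 0 := by
      apply IHd m _ i ⟨(j:ℕ)-1, by first | omega | (simp only [Fin.val_mk]; try omega)⟩ (by first | omega | (simp only [Fin.val_mk]; try omega)) (by first | omega | (simp only [Fin.val_mk]; try omega))
      show (if (i:ℕ) = (j:ℕ)-1 then x j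
          else if (i:ℕ) = (j:ℕ) then x ⟨(j:ℕ)-1, by first | omega | (simp only [Fin.val_mk]; try omega)⟩ else x i)
        = (if (((⟨(j:ℕ)-1, by first | omega | (simp only [Fin.val_mk]; try omega)⟩ : Fin m)):ℕ) = (j:ℕ)-1 then x j
          else if (((⟨(j:ℕ)-1, by first | omega | (simp only [Fin.val_mk]; try omega)⟩ : Fin m)):ℕ) = (j:ℕ) then x ⟨(j:ℕ)-1, by first | omega | (simp only [Fin.val_mk]; try omega)⟩
          else x ⟨(j:ℕ)-1, by first | omega | (simp only [Fin.val_mk]; try omega)⟩)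
      rw [if_neg (by first | omega | (simp only [Fin.val_mk]; try omega)), if_neg (by first | omega | (simp only [Fin.val_mk]; try omega)), if_pos (by first | omega | (simp only [Fin.val_mk]; try omega))]
      exact hx
    rw [hzero] at hswap
    rw [← neg_neg (fpoly m x), ← hswap, neg_zero]

end Aux

/-- For every `m ≥ 2`, the multilinear polynomial `f_m` vanishes whenever two
of its arguments coincide (i.e. `f_m` is alternating). -/
theorem fpoly_alternating
    (F : Type*) [Field F] (hchar : (2 : F) ≠ 0)
    (A : Type*) [NonUnitalNonAssocRing A] [Module F A]
    [SMulCommClass F A A] [IsScalarTower F A A]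
    (m : ℕ) (hm : 2 ≤ m) (x : Fin m → A) (i j : Fin m)
    (hij : i ≠ j) (hx : x i = x j) :
    fpoly m x = 0 := by
  have hne : (i:ℕ) ≠ (j:ℕ) := fun e => hij (Fin.ext e)
  rcases Nat.lt_or_ge (i:ℕ) (j:ℕ) with h | h
  · exact fpoly_aux F hchar ((j:ℕ)-(i:ℕ)-1) m x i j h (by omega) hx
  · exact fpoly_aux F hchar ((i:ℕ)-(j:ℕ)-1) m x j i (by omega) (by omega) hx.symm
end

section
/- Let A be a flexible algebra over a field F with at least 3 elements and characteristic ≠ 2, and let g: A^m → A be a multilinear alternating map satisfying g(x², x, x₃, …, x_m) = 0 for all x, x₃, …, x_m ∈ A. Then g satisfies the linearized identity g(x∘y, x₂, …, x_{m-1}, z) = g(x, x₂, …, x_{m-1}, z∘y) + g(y, x₂, …, x_{m-1}, z∘x) for all x, y, z, x₂, …, x_{m-1} ∈ A. -/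
/-- Let `A` be a flexible algebra over a field `F` with at least 3 elements and
characteristic ≠ 2, and `g : A^{m+2} → A` a multilinear alternating map with
`g(x², x, x₃, …) = 0` for all substitutions.  Then `g` satisfies the linearized
identity `g(x∘y, …, z) = g(x, …, z∘y) + g(y, …, z∘x)`. -/
theorem alternating_strong_skew_linearized
    (F : Type*) [Field F] (hchar : (2 : F) ≠ 0)
    (hcard : ∃ a b c : F, a ≠ b ∧ b ≠ c ∧ a ≠ c)
    (A : Type*) [NonUnitalNonAssocRing A] [Module F A]
    [SMulCommClass F A A] [IsScalarTower F A A]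
    (hflex : ∀ x y : A, (x * y) * x = x * (y * x))
    (m : ℕ) (g : AlternatingMap F A A (Fin (m + 2)))
    (hg : ∀ (x : A) (v : Fin m → A),
      g (Fin.cons (x * x) (Fin.cons x v)) = 0)
    (x y z : A) (v : Fin m → A) :
    g (Fin.snoc (Fin.cons (x * y + y * x) v) z) =
      g (Fin.snoc (Fin.cons x v) (z * y + y * z)) +
      g (Fin.snoc (Fin.cons y v) (z * x + x * z)) := by
  classical
  have h0 : ∀ (w : Fin (m+1) → A) (a a' : A),
      g (Fin.cons (a + a') w) = g (Fin.cons a w) + g (Fin.cons a' w) := by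
    intro w a a'
    have := g.map_update_add (Fin.cons a w) 0 a a'
    simpa [Fin.update_cons_zero] using this
  have h1 : ∀ (a c c' : A),
      g (Fin.cons a (Fin.cons (c + c') v)) =
        g (Fin.cons a (Fin.cons c v)) + g (Fin.cons a (Fin.cons c' v)) := by
    intro a c c'
    have h := g.map_update_add (Fin.cons a (Fin.cons c v)) ((0 : Fin (m+1)).succ) c c'
    rw [← Fin.cons_update, ← Fin.cons_update, ← Fin.cons_update] at h
    simpa [Fin.update_cons_zero] using h
  have key : ∀ a b c : A,
      g (Fin.cons (a*b + b*a) (Fin.cons c v)) +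
      g (Fin.cons (b*c + c*b) (Fin.cons a v)) +
      g (Fin.cons (a*c + c*a) (Fin.cons b v)) = 0 := by
    intro a b c
    have H := hg (a+b+c) v
    have Hab := hg (a+b) v
    have Hac := hg (a+c) v
    have Hbc := hg (b+c) v
    have Ha := hg a v
    have Hb := hg b v
    have Hc := hg c v
    simp only [mul_add, add_mul, h0, h1] at H Hab Hac Hbc ⊢
    linear_combination (norm := abel1) H - Hab - Hac - Hbc + Ha + Hb + Hc
  have τdef : ∀ (a c : A),
      Fin.snoc (Fin.cons a v) c =
        (Fin.cons c (Fin.cons a v)) ∘ (Fin.last (m+1)).cycleRange := by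
    intro a c
    funext i
    induction i using Fin.lastCases with
    | last => simp [Fin.cycleRange_self]
    | cast j =>
      have hj : j.castSucc < Fin.last (m+1) := Fin.castSucc_lt_last j
      simp [Fin.cycleRange_of_lt hj, Fin.coeSucc_eq_succ]
  have hsnoc : ∀ (a c : A),
      g (Fin.snoc (Fin.cons a v) c) =
        Equiv.Perm.sign ((Fin.last (m+1)).cycleRange) • g (Fin.cons c (Fin.cons a v)) := by
    intro a c
    rw [τdef, g.map_perm]
  have hswap : ∀ p q : A,
      g (Fin.cons p (Fin.cons q v)) = - g (Fin.cons q (Fin.cons p v)) := by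
    intro p q
    have h01 : (0 : Fin (m+2)) ≠ 1 := by
      simp [Fin.ext_iff]
    have hfun : Fin.cons p (Fin.cons q v) =
        (Fin.cons q (Fin.cons p v)) ∘ (Equiv.swap (0 : Fin (m+2)) 1) := by
      funext i
      induction i using Fin.cases with
      | zero => simp [Equiv.swap_apply_left]
      | succ j =>
        induction j using Fin.cases with
        | zero =>
          rw [Function.comp_apply, Fin.succ_zero_eq_one, Equiv.swap_apply_right]
          simp [Fin.succ_zero_eq_one]
        | succ k =>
          rw [Function.comp_apply, Equiv.swap_apply_of_ne_of_ne (Fin.succ_ne_zero _)]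
          · simp
          · rw [← Fin.succ_zero_eq_one]
            exact fun h => Fin.succ_ne_zero _ (Fin.succ_injective _ h)
    rw [hfun, g.map_swap _ h01]
  have main : g (Fin.cons z (Fin.cons (x*y + y*x) v)) =
      g (Fin.cons (z*y + y*z) (Fin.cons x v)) +
      g (Fin.cons (z*x + x*z) (Fin.cons y v)) := by
    have k := key x y z
    rw [hswap z (x*y + y*x), add_comm (z*y) (y*z), add_comm (z*x) (x*z)]
    rw [add_assoc] at k
    exact neg_eq_of_add_eq_zero_right k
  rw [hsnoc, hsnoc, hsnoc, main, smul_add]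
end

section
/- Let A be an anticommutative alternative algebra over a field of characteristic ≠ 2 (i.e., A satisfies x² = 0 and the alternative laws). Then A is nilpotent of index 4: every product of any four elements of A, with any arrangement of parentheses, is zero. -/
/-- An anticommutative alternative algebra over a field of characteristic ≠ 2
is nilpotent of index 4: every product of four elements, with any arrangement
of parentheses, is zero. -/
theorem anticomm_alternative_nilpotent_four
    (F : Type*) [Field F] (hchar : (2 : F) ≠ 0)
    (A : Type*) [NonUnitalNonAssocRing A] [Module F A]
    [SMulCommClass F A A] [IsScalarTower F A A]
    (hsq : ∀ x : A, x * x = 0)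
    (haltL : ∀ x y : A, (x * x) * y = x * (x * y))
    (haltR : ∀ x y : A, (x * y) * y = x * (y * y))
    (a b c d : A) :
    ((a * b) * c) * d = 0 ∧ (a * (b * c)) * d = 0 ∧ (a * b) * (c * d) = 0 ∧
      a * ((b * c) * d) = 0 ∧ a * (b * (c * d)) = 0 := by
  -- anticommutativity
  have anti : ∀ x y : A, x * y = -(y * x) := by
    intro x y
    have h := hsq (x + y)
    rw [mul_add, add_mul, add_mul, hsq, hsq, zero_add, add_zero] at h
    exact eq_neg_of_add_eq_zero_left (by rwa [add_comm] at h)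
  -- x * (x * y) = 0
  have l0 : ∀ x y : A, x * (x * y) = 0 := by
    intro x y; rw [← haltL, hsq, zero_mul]
  -- (x * y) * y = 0
  have r0 : ∀ x y : A, (x * y) * y = 0 := by
    intro x y; rw [haltR, hsq, mul_zero]
  -- linearized: x*(y*z) = -(y*(x*z))
  have llin : ∀ x y z : A, x * (y * z) = -(y * (x * z)) := by
    intro x y z
    have h := l0 (x + y) z
    simp only [add_mul, mul_add, l0, r0, zero_add, add_zero] at h
    first
    | exact eq_neg_of_add_eq_zero_left h
    | exact eq_neg_of_add_eq_zero_left (by rwa [add_comm] at h)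
  -- linearized: (x*y)*z = -((x*z)*y)
  have rlin : ∀ x y z : A, (x * y) * z = -((x * z) * y) := by
    intro x y z
    have h := r0 x (y + z)
    simp only [mul_add, add_mul, l0, r0, zero_add, add_zero] at h
    first
    | exact eq_neg_of_add_eq_zero_left h
    | exact eq_neg_of_add_eq_zero_left (by rwa [add_comm] at h)
  -- x*(y*z) = -((x*y)*z)
  have swap : ∀ x y z : A, x * (y * z) = -((x * y) * z) := by
    intro x y z
    rw [anti x (y * z), rlin y z x, anti y x, neg_mul, neg_neg]
  -- main: E = ((a*b)*c)*d satisfies E = -E, hence 2•E = 0, hence E = 0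
  have key : ((a * b) * c) * d = -(((a * b) * c) * d) := by
    have h2 : (c * d) * a = (a * c) * d := by
      rw [rlin c d a, anti c a, neg_mul, neg_neg]
    calc ((a * b) * c) * d
        = -((a * b) * (c * d)) := by rw [swap (a * b) c d, neg_neg]
      _ = (c * d) * (a * b) := by rw [anti (a * b) (c * d), neg_neg]
      _ = -(((c * d) * a) * b) := swap (c * d) a b
      _ = -(((a * c) * d) * b) := by rw [h2]
      _ = ((a * c) * b) * d := by rw [rlin (a * c) d b, neg_neg]
      _ = -(((a * b) * c) * d) := by rw [rlin a c b, neg_mul]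
  have E0 : ((a * b) * c) * d = 0 := by
    have h2 : (2 : F) • (((a * b) * c) * d) = 0 := by
      rw [two_smul]
      nth_rewrite 1 [key]
      exact neg_add_cancel _
    exact (smul_eq_zero.mp h2).resolve_left hchar
  refine ⟨E0, ?_, ?_, ?_, ?_⟩
  · rw [swap a b c, neg_mul, E0, neg_zero]
  · rw [swap (a * b) c d, E0, neg_zero]
  · rw [swap a (b * c) d, swap a b c, neg_mul, neg_neg, E0]
  · rw [swap a b (c * d), swap (a * b) c d, neg_neg, E0]
end

section
/- Let A be an anticommutative alternative algebra over a field F of characteristic ≠ 2 generated by a set {a_i : i ∈ I}. Then A is spanned as an F-vector space by the elements a_i, a_i a_j, and (a_i a_j) a_k with i < j < k (for any fixed total order on I). -/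
/-- An anticommutative alternative algebra over a field of characteristic ≠ 2
generated by `{a_i : i ∈ I}` (I linearly ordered) is spanned as a vector space
by the elements `a_i`, `a_i * a_j` and `(a_i * a_j) * a_k` with `i < j < k`. -/
theorem anticomm_alternative_span
    (F : Type*) [Field F] (hchar : (2 : F) ≠ 0)
    (A : Type*) [NonUnitalNonAssocRing A] [Module F A]
    [SMulCommClass F A A] [IsScalarTower F A A]
    (hsq : ∀ x : A, x * x = 0)
    (haltL : ∀ x y : A, (x * x) * y = x * (x * y))
    (haltR : ∀ x y : A, (x * y) * y = x * (y * y))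
    (I : Type*) [LinearOrder I] (a : I → A)
    (hgen : NonUnitalAlgebra.adjoin F (Set.range a) = ⊤) :
    Submodule.span F
      ({x | ∃ i, x = a i} ∪
       {x | ∃ i j, i < j ∧ x = a i * a j} ∪
       {x | ∃ i j k, i < j ∧ j < k ∧ x = (a i * a j) * a k}) = ⊤ := by
  set s : Set A := ({x | ∃ i, x = a i} ∪
       {x | ∃ i j, i < j ∧ x = a i * a j} ∪
       {x | ∃ i j k, i < j ∧ j < k ∧ x = (a i * a j) * a k}) with hs
  -- anticommutativity
  have anti : ∀ x y : A, x * y = -(y * x) := by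
    intro x y
    have h := hsq (x + y)
    rw [mul_add, add_mul, add_mul, hsq, hsq, zero_add, add_zero] at h
    exact eq_neg_of_add_eq_zero_right h
  have lxx : ∀ x y : A, x * (x * y) = 0 := fun x y => by rw [← haltL, hsq, zero_mul]
  have P3 : ∀ x y z : A, (x * y) * z = -((x * z) * y) := by
    intro x y z
    have h := haltR x (y + z)
    simp only [mul_add, add_mul, hsq, mul_zero, haltR, zero_add, add_zero] at h
    exact eq_neg_of_add_eq_zero_right h
  have P4 : ∀ x y z : A, x * (y * z) = -(y * (x * z)) := by
    intro x y z
    have h := haltL (x + y) z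
    simp only [add_mul, mul_add, hsq, zero_mul, lxx, zero_add, add_zero] at h
    exact eq_neg_of_add_eq_zero_left (by rw [add_comm]; exact h.symm)
  have cyc : ∀ x y z : A, (x * y) * z = (y * z) * x := by
    intro x y z
    rw [anti x y, neg_mul, P3 y x z, neg_neg]
  have tt : ∀ v : A, v + v = 0 → v = 0 := by
    intro v hv
    have h2 : (2 : F) • v = 0 := by rw [two_smul]; exact hv
    have := congrArg (fun w : A => (2 : F)⁻¹ • w) h2
    simpa [smul_smul, inv_mul_cancel₀ hchar] using this
  have cyc4 : ∀ w x y z : A, (w * x) * (y * z) = -((z * w) * (x * y)) := by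
    intro w x y z
    calc (w * x) * (y * z) = -(y * ((w * x) * z)) := P4 (w * x) y z
      _ = -(y * ((x * z) * w)) := by rw [cyc w x z]
      _ = -(y * (-(w * (x * z)))) := by rw [anti (x * z) w]
      _ = y * (w * (x * z)) := by rw [mul_neg, neg_neg]
      _ = -(w * (y * (x * z))) := P4 y w (x * z)
      _ = -(w * (-(x * (y * z)))) := by rw [P4 y x z]
      _ = w * (x * (y * z)) := by rw [mul_neg, neg_neg]
      _ = -(x * (w * (y * z))) := P4 w x (y * z)
      _ = -(x * (-((y * z) * w))) := by rw [anti w (y * z)]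
      _ = x * ((y * z) * w) := by rw [mul_neg, neg_neg]
      _ = x * ((z * w) * y) := by rw [cyc y z w]
      _ = -((z * w) * (x * y)) := P4 x (z * w) y
  have pair : ∀ w x y z : A, (w * x) * (y * z) = 0 := by
    intro w x y z
    have h1 : (w * x) * (y * z) = (y * z) * (w * x) := by
      rw [cyc4 w x y z, cyc4 z w x y, neg_neg]
    have h2 : (w * x) * (y * z) = -((y * z) * (w * x)) := anti _ _
    have h3 : (y * z) * (w * x) = -((y * z) * (w * x)) := h1.symm.trans h2
    have h4 : (y * z) * (w * x) = 0 := tt _ (eq_neg_iff_add_eq_zero.mp h3)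
    rw [h1, h4]
  have quad : ∀ x y z w : A, ((x * y) * z) * w = 0 := by
    intro x y z w
    rw [cyc (x * y) z w]; exact pair z w x y
  have tr1 : ∀ x y : A, (x * y) * y = 0 := fun x y => by rw [haltR, hsq, mul_zero]
  have tr2 : ∀ x y : A, (x * y) * x = 0 := fun x y => by
    rw [P3 x y x, hsq, zero_mul, neg_zero]
  -- membership lemmas
  have memT : ∀ i j k : I, i < j → j < k → (a i * a j) * a k ∈ Submodule.span F s :=
    fun i j k h1 h2 => Submodule.subset_span (Set.mem_union_right _ ⟨i, j, k, h1, h2, rfl⟩)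
  have memP : ∀ i j : I, i < j → a i * a j ∈ Submodule.span F s :=
    fun i j h => Submodule.subset_span
      (Set.mem_union_left _ (Set.mem_union_right _ ⟨i, j, h, rfl⟩))
  have hT : ∀ i j k : I, (a i * a j) * a k ∈ Submodule.span F s := by
    intro i j k
    rcases lt_trichotomy i j with hij | rfl | hij
    · rcases lt_trichotomy j k with hjk | rfl | hjk
      · exact memT i j k hij hjk
      · rw [tr1]; exact zero_mem _
      · rcases lt_trichotomy i k with hik | rfl | hik
        · rw [P3]; exact neg_mem (memT i k j hik hjk)
        · rw [tr2]; exact zero_mem _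
        · rw [cyc, cyc]; exact memT k i j hik hij
    · rw [hsq, zero_mul]; exact zero_mem _
    · rcases lt_trichotomy i k with hik | rfl | hik
      · rw [anti (a i) (a j), neg_mul]; exact neg_mem (memT j i k hij hik)
      · rw [tr2]; exact zero_mem _
      · rcases lt_trichotomy j k with hjk | rfl | hjk
        · rw [cyc]; exact memT j k i hjk hik
        · rw [tr1]; exact zero_mem _
        · rw [anti (a i) (a j), neg_mul, cyc, cyc]; exact neg_mem (memT k j i hjk hij)
  have hP : ∀ i j : I, a i * a j ∈ Submodule.span F s := by
    intro i j
    rcases lt_trichotomy i j with h | rfl | h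
    · exact memP i j h
    · rw [hsq]; exact zero_mem _
    · rw [anti]; exact neg_mem (memP j i h)
  have key : ∀ x ∈ s, ∀ y ∈ s, x * y ∈ Submodule.span F s := by
    intro x hx y hy
    simp only [hs, Set.mem_union, Set.mem_setOf_eq] at hx hy
    rcases hx with (⟨i, rfl⟩ | ⟨i, j, hij, rfl⟩) | ⟨i, j, k, hij, hjk, rfl⟩ <;>
      rcases hy with (⟨p, rfl⟩ | ⟨p, q, hpq, rfl⟩) | ⟨p, q, r, hpq, hqr, rfl⟩
    · exact hP i p
    · rw [anti (a i) (a p * a q)]; exact neg_mem (hT p q i)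
    · rw [anti (a i) ((a p * a q) * a r), quad (a p) (a q) (a r) (a i), neg_zero]
      exact zero_mem _
    · exact hT i j p
    · rw [pair]; exact zero_mem _
    · rw [pair]; exact zero_mem _
    · rw [quad]; exact zero_mem _
    · rw [pair]; exact zero_mem _
    · rw [pair]; exact zero_mem _
  have hclosed : ∀ x y : A, x ∈ Submodule.span F s → y ∈ Submodule.span F s →
      x * y ∈ Submodule.span F s := by
    intro x y hx hy
    induction hx using Submodule.span_induction with
    | mem u hu =>
      induction hy using Submodule.span_induction with
      | mem v hv => exact key u hu v hv
      | zero => rw [mul_zero]; exact zero_mem _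
      | add v w _ _ h1 h2 => rw [mul_add]; exact add_mem h1 h2
      | smul c v _ h1 => rw [mul_smul_comm]; exact Submodule.smul_mem _ _ h1
    | zero => rw [zero_mul]; exact zero_mem _
    | add u v _ _ h1 h2 => rw [add_mul]; exact add_mem h1 h2
    | smul c u _ h1 => rw [smul_mul_assoc]; exact Submodule.smul_mem _ _ h1
  have hsub : NonUnitalAlgebra.adjoin F (Set.range a) ≤
      (Submodule.span F s).toNonUnitalSubalgebra hclosed := by
    apply NonUnitalAlgebra.adjoin_le
    rintro _ ⟨i, rfl⟩
    exact Submodule.subset_span (Set.mem_union_left _ (Set.mem_union_left _ ⟨i, rfl⟩))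
  rw [hgen] at hsub
  rw [eq_top_iff]
  intro x _
  exact (Submodule.mem_toNonUnitalSubalgebra).mp (hsub (by trivial))
end

section
/- Let A be an anticommutative alternative algebra over a field of characteristic ≠ 2 generated by m elements. Then the dimension of A over F is at most m + C(m,2) + C(m,3), where C(m,k) denotes the binomial coefficient. -/
/-- Auxiliary: product of the two elements of a (supposedly 2-element) finset. -/
def auxP2 {m : ℕ} {A : Type*} [Mul A] [Zero A] (a : Fin m → A) (s : Finset (Fin m)) : A :=
  match s.sort (· ≤ ·) with
  | [i, j] => a i * a j
  | _ => 0

/-- Auxiliary: product of the three elements of a (supposedly 3-element) finset. -/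
def auxP3 {m : ℕ} {A : Type*} [Mul A] [Zero A] (a : Fin m → A) (s : Finset (Fin m)) : A :=
  match s.sort (· ≤ ·) with
  | [i, j, k] => (a i * a j) * a k
  | _ => 0

theorem auxP2_eq {m : ℕ} {A : Type*} [Mul A] [Zero A] (a : Fin m → A) {s : Finset (Fin m)}
    {i j : Fin m} (h : s.sort (· ≤ ·) = [i, j]) : auxP2 a s = a i * a j := by
  unfold auxP2; rw [h]

theorem auxP3_eq {m : ℕ} {A : Type*} [Mul A] [Zero A] (a : Fin m → A) {s : Finset (Fin m)}
    {i j k : Fin m} (h : s.sort (· ≤ ·) = [i, j, k]) : auxP3 a s = (a i * a j) * a k := by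
  unfold auxP3; rw [h]

/-- An anticommutative alternative algebra over a field of characteristic ≠ 2
generated by `m` elements has dimension at most `m + C(m,2) + C(m,3)`. -/
theorem anticomm_alternative_dim_bound
    (F : Type*) [Field F] (hchar : (2 : F) ≠ 0)
    (A : Type*) [NonUnitalNonAssocRing A] [Module F A]
    [SMulCommClass F A A] [IsScalarTower F A A]
    (hsq : ∀ x : A, x * x = 0)
    (haltL : ∀ x y : A, (x * x) * y = x * (x * y))
    (haltR : ∀ x y : A, (x * y) * y = x * (y * y))
    (m : ℕ) (a : Fin m → A)
    (hgen : NonUnitalAlgebra.adjoin F (Set.range a) = ⊤) :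
    Module.rank F A ≤ (m + m.choose 2 + m.choose 3 : ℕ) := by
  classical
  -- anticommutativity
  have anti : ∀ x y : A, x * y = -(y * x) := by
    intro x y
    have h := hsq (x + y)
    rw [mul_add, add_mul, add_mul, hsq, hsq, zero_add, add_zero] at h
    exact eq_neg_of_add_eq_zero_right h
  -- linearized left alternativity
  have L1 : ∀ x y z : A, x * (y * z) = -(y * (x * z)) := by
    intro x y z
    have h := haltL (x + y) z
    rw [hsq, zero_mul] at h
    simp only [add_mul, mul_add] at h
    have e1 : x * (x * z) = 0 := by rw [← haltL, hsq, zero_mul]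
    have e2 : y * (y * z) = 0 := by rw [← haltL, hsq, zero_mul]
    rw [e1, e2, zero_add, add_zero] at h
    rw [eq_neg_iff_add_eq_zero, add_comm]
    exact h.symm
  -- linearized right alternativity
  have R1 : ∀ x y z : A, (x * y) * z = -((x * z) * y) := by
    intro x y z
    have h := haltR x (y + z)
    rw [hsq, mul_zero] at h
    simp only [add_mul, mul_add] at h
    have e1 : (x * y) * y = 0 := by rw [haltR, hsq, mul_zero]
    have e2 : (x * z) * z = 0 := by rw [haltR, hsq, mul_zero]
    rw [e1, e2, zero_add, add_zero] at h
    rw [eq_neg_iff_add_eq_zero, add_comm]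
    exact h
  -- swap in the first two slots
  have sw12 : ∀ x y z : A, (x * y) * z = -((y * x) * z) := by
    intro x y z
    rw [anti x y, neg_mul]
  -- flip of associativity
  have flip : ∀ x y z : A, (x * y) * z = -(x * (y * z)) := by
    intro x y z
    calc (x * y) * z = -(z * (x * y)) := anti _ _
      _ = -(-(x * (z * y))) := by rw [L1]
      _ = x * (z * y) := neg_neg _
      _ = x * (-(y * z)) := by rw [anti z y]
      _ = -(x * (y * z)) := mul_neg _ _
  -- all products of length four vanish
  have quad : ∀ x y z w : A, ((x * y) * z) * w = 0 := by
    intro x y z w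
    have e : x * (z * w) = -((x * z) * w) := by rw [flip x z w, neg_neg]
    have h2 : (x * y) * (z * w) = ((x * z) * w) * y := by
      calc (x * y) * (z * w) = -((x * (z * w)) * y) := R1 x y (z * w)
        _ = -((-((x * z) * w)) * y) := by rw [e]
        _ = ((x * z) * w) * y := by rw [neg_mul, neg_neg]
    have h3 : ((x * z) * w) * y = ((x * y) * z) * w := by
      calc ((x * z) * w) * y = -(((x * z) * y) * w) := R1 _ _ _
        _ = -((-((x * y) * z)) * w) := by rw [R1 x z y]
        _ = ((x * y) * z) * w := by rw [neg_mul, neg_neg]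
    have h1 : ((x * y) * z) * w = -((x * y) * (z * w)) := flip (x * y) z w
    have h4 : ((x * y) * z) * w = -(((x * y) * z) * w) := by
      calc ((x * y) * z) * w = -((x * y) * (z * w)) := h1
        _ = -(((x * z) * w) * y) := by rw [h2]
        _ = -(((x * y) * z) * w) := by rw [h3]
    have h5 : (2 : F) • (((x * y) * z) * w) = 0 := by
      rw [two_smul]
      nth_rewrite 2 [h4]
      exact add_neg_cancel _
    rcases smul_eq_zero.mp h5 with h | h
    · exact absurd h hchar
    · exact h
  have quad' : ∀ x y z w : A, w * ((x * y) * z) = 0 := by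
    intro x y z w
    rw [anti, quad, neg_zero]
  have prod4 : ∀ x y z w : A, (x * y) * (z * w) = 0 := by
    intro x y z w
    have e := flip (x * y) z w
    rw [quad] at e
    exact (neg_eq_zero.mp e.symm)
  -- the spanning finset
  let T : Finset A :=
    (Finset.univ.image a) ∪ ((Finset.univ.powersetCard 2).image (auxP2 a))
      ∪ ((Finset.univ.powersetCard 3).image (auxP3 a))
  set S : Submodule F A := Submodule.span F (↑T : Set A) with hS
  -- generators are in T
  have hgenT : ∀ i, a i ∈ T := by
    intro i
    refine Finset.mem_union_left _ (Finset.mem_union_left _ ?_)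
    exact Finset.mem_image_of_mem a (Finset.mem_univ i)
  -- sorted pairs
  have sortPair : ∀ i j : Fin m, i < j → ({i, j} : Finset (Fin m)).sort (· ≤ ·) = [i, j] := by
    intro i j hij
    have h₂ : i ∉ ({j} : Finset (Fin m)) := by simp [hij.ne]
    rw [show ({i, j} : Finset (Fin m)) = insert i {j} from rfl,
      Finset.sort_insert (· ≤ ·) (by simp [hij.le]) h₂, Finset.sort_singleton]
  have sortTriple : ∀ i j k : Fin m, i < j → j < k →
      ({i, j, k} : Finset (Fin m)).sort (· ≤ ·) = [i, j, k] := by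
    intro i j k hij hjk
    have hik := hij.trans hjk
    have h₂ : i ∉ ({j, k} : Finset (Fin m)) := by simp [hij.ne, hik.ne]
    have h₂' : j ∉ ({k} : Finset (Fin m)) := by simp [hjk.ne]
    have h₁ : ∀ b ∈ ({j, k} : Finset (Fin m)), i ≤ b := by
      intro b hb
      rcases Finset.mem_insert.mp hb with rfl | hb
      · exact hij.le
      · rw [Finset.mem_singleton] at hb; subst hb; exact hik.le
    have e1 : ({i, j, k} : Finset (Fin m)).sort (· ≤ ·) = i :: ({j, k} : Finset (Fin m)).sort (· ≤ ·) :=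
      Finset.sort_insert (· ≤ ·) h₁ h₂
    have e2 : ({j, k} : Finset (Fin m)).sort (· ≤ ·) = j :: ({k} : Finset (Fin m)).sort (· ≤ ·) :=
      Finset.sort_insert (· ≤ ·) (by simp [hjk.le]) h₂'
    rw [e1, e2, Finset.sort_singleton]
  -- pair membership
  have pairT : ∀ i j : Fin m, i < j → a i * a j ∈ T := by
    intro i j hij
    refine Finset.mem_union_left _ (Finset.mem_union_right _ ?_)
    refine Finset.mem_image.mpr ⟨{i, j}, ?_, (auxP2_eq a (sortPair i j hij)).symm ▸ rfl⟩
    exact Finset.mem_powersetCard.mpr ⟨Finset.subset_univ _, Finset.card_pair hij.ne⟩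
  have pair_mem : ∀ i j : Fin m, a i * a j ∈ S := by
    intro i j
    rcases lt_trichotomy i j with h | rfl | h
    · exact Submodule.subset_span (pairT i j h)
    · rw [hsq]; exact Submodule.zero_mem _
    · rw [anti]
      exact Submodule.neg_mem _ (Submodule.subset_span (pairT j i h))
  -- triple membership
  have tripT : ∀ i j k : Fin m, i < j → j < k → (a i * a j) * a k ∈ T := by
    intro i j k hij hjk
    refine Finset.mem_union_right _ ?_
    refine Finset.mem_image.mpr ⟨{i, j, k}, ?_, (auxP3_eq a (sortTriple i j k hij hjk)).symm ▸ rfl⟩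
    refine Finset.mem_powersetCard.mpr ⟨Finset.subset_univ _, ?_⟩
    rw [Finset.card_insert_of_notMem (by simp [hij.ne, (hij.trans hjk).ne]),
      Finset.card_pair hjk.ne]
  have tz1 : ∀ x y : A, (x * x) * y = 0 := by intro x y; rw [hsq, zero_mul]
  have tz2 : ∀ x y : A, (x * y) * y = 0 := by intro x y; rw [haltR, hsq, mul_zero]
  have tz3 : ∀ x y : A, (x * y) * x = 0 := by
    intro x y; rw [R1, tz1, neg_zero]
  have key : ∀ i j k : Fin m, i < j → (a i * a j) * a k ∈ S := by
    intro i j k hij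
    rcases lt_trichotomy j k with h | rfl | h
    · exact Submodule.subset_span (tripT i j k hij h)
    · rw [tz2]; exact Submodule.zero_mem _
    · rcases lt_trichotomy i k with h2 | rfl | h2
      · rw [R1]
        exact Submodule.neg_mem _ (Submodule.subset_span (tripT i k j h2 h))
      · rw [tz3]; exact Submodule.zero_mem _
      · rw [R1, sw12, neg_neg]
        exact Submodule.subset_span (tripT k i j h2 hij)
  have trip_mem : ∀ i j k : Fin m, (a i * a j) * a k ∈ S := by
    intro i j k
    rcases lt_trichotomy i j with h | rfl | h
    · exact key i j k h
    · rw [tz1]; exact Submodule.zero_mem _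
    · rw [sw12]
      exact Submodule.neg_mem _ (key j i k h)
  -- structure of elements of T
  have Tform : ∀ x ∈ T, (∃ i, x = a i) ∨ (∃ i j, x = a i * a j) ∨
      (∃ i j k, x = (a i * a j) * a k) := by
    intro x hx
    rcases Finset.mem_union.mp hx with hx | hx
    · rcases Finset.mem_union.mp hx with hx | hx
      · obtain ⟨i, -, rfl⟩ := Finset.mem_image.mp hx
        exact Or.inl ⟨i, rfl⟩
      · obtain ⟨s, hs, rfl⟩ := Finset.mem_image.mp hx
        have hcard : (s.sort (· ≤ ·)).length = 2 := by
          rw [Finset.length_sort, (Finset.mem_powersetCard.mp hs).2]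
        obtain ⟨i, j, hl⟩ := List.length_eq_two.mp hcard
        exact Or.inr (Or.inl ⟨i, j, auxP2_eq a hl⟩)
    · obtain ⟨s, hs, rfl⟩ := Finset.mem_image.mp hx
      have hcard : (s.sort (· ≤ ·)).length = 3 := by
        rw [Finset.length_sort, (Finset.mem_powersetCard.mp hs).2]
      obtain ⟨i, j, k, hl⟩ := List.length_eq_three.mp hcard
      exact Or.inr (Or.inr ⟨i, j, k, auxP3_eq a hl⟩)
  -- T is multiplicatively closed into S
  have mulT : ∀ x ∈ T, ∀ y ∈ T, x * y ∈ S := by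
    intro x hx y hy
    rcases Tform x hx with ⟨i, rfl⟩ | ⟨i, j, rfl⟩ | ⟨i, j, k, rfl⟩
    · rcases Tform y hy with ⟨p, rfl⟩ | ⟨p, q, rfl⟩ | ⟨p, q, r, rfl⟩
      · exact pair_mem i p
      · rw [anti]
        exact Submodule.neg_mem _ (trip_mem p q i)
      · rw [quad' (a p) (a q) (a r)]; exact Submodule.zero_mem _
    · rcases Tform y hy with ⟨p, rfl⟩ | ⟨p, q, rfl⟩ | ⟨p, q, r, rfl⟩
      · exact trip_mem i j p
      · rw [prod4]; exact Submodule.zero_mem _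
      · rw [quad' (a p) (a q) (a r)]; exact Submodule.zero_mem _
    · rw [quad]; exact Submodule.zero_mem _
  -- S is closed under multiplication
  have hclosed : ∀ x y : A, x ∈ S → y ∈ S → x * y ∈ S := by
    intro x y hx hy
    rw [hS] at hx hy
    refine Submodule.span_induction₂ (p := fun u v _ _ => u * v ∈ S)
      (fun u v hu hv => mulT u hu v hv)
      (fun v _ => by show (0 : A) * v ∈ S; rw [zero_mul]; exact Submodule.zero_mem _)
      (fun u _ => by show u * (0 : A) ∈ S; rw [mul_zero]; exact Submodule.zero_mem _)
      (fun u v w _ _ _ h1 h2 => by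
        show (u + v) * w ∈ S; rw [add_mul]; exact Submodule.add_mem _ h1 h2)
      (fun u v w _ _ _ h1 h2 => by
        show u * (v + w) ∈ S; rw [mul_add]; exact Submodule.add_mem _ h1 h2)
      (fun r u v _ _ h => by
        show (r • u) * v ∈ S; rw [smul_mul_assoc]; exact Submodule.smul_mem _ _ h)
      (fun r u v _ _ h => by
        show u * (r • v) ∈ S; rw [mul_smul_comm]; exact Submodule.smul_mem _ _ h)
      hx hy
  -- S = ⊤
  have hT : S = ⊤ := by
    let S' : NonUnitalSubalgebra F A := S.toNonUnitalSubalgebra hclosed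
    have hle : NonUnitalAlgebra.adjoin F (Set.range a) ≤ S' := by
      apply NonUnitalAlgebra.adjoin_le
      rintro - ⟨i, rfl⟩
      exact Submodule.subset_span (hgenT i)
    rw [hgen] at hle
    rw [eq_top_iff]
    intro x _hx
    exact hle (NonUnitalAlgebra.mem_top)
  -- cardinality bound
  have hcard : T.card ≤ m + m.choose 2 + m.choose 3 := by
    refine (Finset.card_union_le _ _).trans ?_
    refine Nat.add_le_add ((Finset.card_union_le _ _).trans (Nat.add_le_add ?_ ?_)) ?_
    · exact (Finset.card_image_le).trans (by simp)
    · refine (Finset.card_image_le).trans ?_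
      rw [Finset.card_powersetCard, Finset.card_univ, Fintype.card_fin]
    · refine (Finset.card_image_le).trans ?_
      rw [Finset.card_powersetCard, Finset.card_univ, Fintype.card_fin]
  -- conclude
  calc Module.rank F A = Module.rank F (⊤ : Submodule F A) := (rank_top F A).symm
    _ = Module.rank F S := by rw [hT]
    _ ≤ Cardinal.mk (↑T : Set A) := rank_span_le _
    _ = (T.card : Cardinal) := Cardinal.mk_coe_finset
    _ ≤ ((m + m.choose 2 + m.choose 3 : ℕ) : Cardinal) := by exact_mod_cast hcard
end

section
/- In any alternative algebra A, the nucleus U(A) and the associator ideal D(A) satisfy U(A)·D(A) = 0, where U(A) is the maximal ideal of A contained in the associative nucleus N(A) = {u ∈ A : (u,A,A) = (A,u,A) = (A,A,u) = 0} and D(A) is the ideal generated by all associators. -/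
/-- A submodule of a nonassociative algebra is a two-sided ideal. -/
def IsTwoSidedIdeal' {F A : Type*} [Field F] [NonUnitalNonAssocRing A]
    [Module F A] (I : Submodule F A) : Prop :=
  ∀ x ∈ I, ∀ a : A, a * x ∈ I ∧ x * a ∈ I

/-- In an alternative algebra, `U(A)·D(A) = 0` where `D(A)` is the ideal
generated by all associators and `U(A)` is the maximal ideal contained in the
associative nucleus `N(A)`.  (Equivalently: any ideal contained in the nucleus
annihilates the smallest ideal containing all associators.) -/
theorem nucleus_ideal_mul_associator_ideal
    (F : Type*) [Field F] (hchar : (2 : F) ≠ 0)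
    (A : Type*) [NonUnitalNonAssocRing A] [Module F A]
    [SMulCommClass F A A] [IsScalarTower F A A]
    (haltL : ∀ x y : A, (x * x) * y = x * (x * y))
    (haltR : ∀ x y : A, (x * y) * y = x * (y * y))
    (U D : Submodule F A)
    (hUideal : IsTwoSidedIdeal' U)
    (hUnuc : ∀ u ∈ U, ∀ a b : A,
      (u * a) * b = u * (a * b) ∧ (a * u) * b = a * (u * b) ∧
      (a * b) * u = a * (b * u))
    (hUmax : ∀ U' : Submodule F A, IsTwoSidedIdeal' U' →
      (∀ u ∈ U', ∀ a b : A,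
        (u * a) * b = u * (a * b) ∧ (a * u) * b = a * (u * b) ∧
        (a * b) * u = a * (b * u)) → U' ≤ U)
    (hDideal : IsTwoSidedIdeal' D)
    (hDassoc : ∀ a b c : A, (a * b) * c - a * (b * c) ∈ D)
    (hDmin : ∀ D' : Submodule F A, IsTwoSidedIdeal' D' →
      (∀ a b c : A, (a * b) * c - a * (b * c) ∈ D') → D ≤ D')
    (u : A) (hu : u ∈ U) (d : A) (hd : d ∈ D) :
    u * d = 0 := by
  -- The annihilator of U on the right
  set D' : Submodule F A :=
    { carrier := {x | ∀ v ∈ U, v * x = 0}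
      add_mem' := by
        intro x y hx hy v hv
        rw [mul_add, hx v hv, hy v hv, add_zero]
      zero_mem' := by intro v hv; exact mul_zero v
      smul_mem' := by
        intro c x hx v hv
        rw [mul_smul_comm, hx v hv, smul_zero] } with hD'
  have hideal : IsTwoSidedIdeal' D' := by
    intro x hx a
    constructor
    · intro v hv
      rw [← (hUnuc v hv a x).1]
      exact hx (v * a) (hUideal v hv a).2
    · intro v hv
      rw [← (hUnuc v hv x a).1, hx v hv, zero_mul]
  have hassoc : ∀ a b c : A, (a * b) * c - a * (b * c) ∈ D' := by
    intro a b c v hv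
    have h1 : v * ((a * b) * c) = ((v * a) * b) * c := by
      rw [← (hUnuc v hv (a * b) c).1, (hUnuc v hv a b).1]
    have h2 : v * (a * (b * c)) = (v * a) * (b * c) := ((hUnuc v hv a (b * c)).1).symm
    have hva : v * a ∈ U := (hUideal v hv a).2
    rw [mul_sub, h1, h2, (hUnuc (v * a) hva b c).1, sub_self]
  exact hDmin D' hideal hassoc hd u hu
end

section
/- In the free associative algebra, the full skew-symmetrization of the iterated commutator x^{[m]} (where x^{[1]} = x, x^{[i+1]} = [x^{[i]}, x], evaluated by substituting distinct variables x₁,…,x_m in all orders with signs) equals zero for m ≥ 3. Concretely: Σ_{σ ∈ S_m} sgn(σ) [[…[[x_{σ(1)}, x_{σ(2)}], x_{σ(3)}], …], x_{σ(m)}] = 0 in any associative algebra, for m ≥ 3. -/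
/-- Left-normed iterated commutator: `leftComm a [b, c, …] = [[…[a,b],c],…]`. -/
def leftComm {R : Type*} [Ring R] : R → List R → R
  | a, [] => a
  | a, b :: l => leftComm (a * b - b * a) l

/-!
Sorting the permutations of `Fin (m + 1)` by the index `q` they send to the last slot writes the
skew-symmetrized left-normed commutator of `m + 1` letters as a signed sum of commutators
`[S(y_q), x_q]`, where `S(y_q)` is the skew-symmetrization of the remaining `m` letters. Hence
vanishing for `m` letters implies vanishing for `m + 1`, and for three letters the sum is twice the
Jacobi identity.
-/

open Equiv Equiv.Perm Fin

def castSuccPerm {n : ℕ} (τ : Perm (Fin n)) : Perm (Fin (n + 1)) :=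
  finSuccEquivLast.symm.permCongr τ.optionCongr

@[simp] theorem castSuccPerm_last {n : ℕ} (τ : Perm (Fin n)) :
    castSuccPerm τ (last n) = last n := by
  simp [castSuccPerm, permCongr_apply]

@[simp] theorem castSuccPerm_castSucc {n : ℕ} (τ : Perm (Fin n)) (i : Fin n) :
    castSuccPerm τ i.castSucc = (τ i).castSucc := by
  simp [castSuccPerm, permCongr_apply]

@[simp] theorem sign_castSuccPerm {n : ℕ} (τ : Perm (Fin n)) :
    sign (castSuccPerm τ) = sign τ := by
  rw [castSuccPerm, sign_permCongr, optionCongr_sign]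

theorem sum_perm_fin_succ {n : ℕ} {M : Type*} [AddCommMonoid M] (f : Perm (Fin (n + 1)) → M) :
    ∑ σ, f σ = ∑ q, ∑ τ, f (swap q (last n) * castSuccPerm τ) := by
  let e : Perm (Fin (n + 1)) ≃ Option (Fin n) × Perm (Fin n) :=
    (permCongr finSuccEquivLast).trans decomposeOption
  rw [← e.symm.sum_comp, Fintype.sum_prod_type, ← finSuccEquivLast.sum_comp]
  refine Fintype.sum_congr _ _ fun q => Fintype.sum_congr _ _ fun τ => congrArg f ?_
  ext i
  simp [e, castSuccPerm, permCongr_apply, finSuccEquivLast.symm.injective.map_swap, swap_comm]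

section

variable {R : Type*} [Ring R]

theorem leftComm_concat (a b : R) (l : List R) :
    leftComm a (l.concat b) = leftComm a l * b - b * leftComm a l := by
  induction l generalizing a with
  | nil => rfl
  | cons c l ih => exact ih _

def leftCommFin {n : ℕ} (y : Fin (n + 1) → R) : R :=
  leftComm (y 0) (List.ofFn fun i => y i.succ)

theorem leftCommFin_succ {n : ℕ} (y : Fin (n + 2) → R) :
    leftCommFin y = (leftCommFin fun i => y i.castSucc) * y (last _)
      - y (last _) * leftCommFin fun i => y i.castSucc := by
  rw [leftCommFin, List.ofFn_succ', leftComm_concat, leftCommFin]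
  simp only [succ_castSucc, succ_last, castSucc_zero]

def skewLeftComm {n : ℕ} (x : Fin (n + 1) → R) : R :=
  ∑ σ : Perm (Fin (n + 1)), (sign σ : ℤ) • leftCommFin (x ∘ σ)

theorem skewLeftComm_succ {n : ℕ} (x : Fin (n + 2) → R) :
    skewLeftComm x = ∑ q, (sign (swap q (last _)) : ℤ) •
      (skewLeftComm (fun i => x (swap q (last _) i.castSucc)) * x q
        - x q * skewLeftComm fun i => x (swap q (last _) i.castSucc)) := by
  rw [skewLeftComm, sum_perm_fin_succ]
  refine Fintype.sum_congr _ _ fun q => ?_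
  rw [skewLeftComm, Finset.sum_mul, Finset.mul_sum, ← Finset.sum_sub_distrib, Finset.smul_sum]
  refine Fintype.sum_congr _ _ fun τ => ?_
  rw [leftCommFin_succ, Perm.sign_mul, sign_castSuccPerm, Units.val_mul, mul_smul, smul_mul_assoc,
    mul_smul_comm, ← smul_sub]
  simp [Function.comp_def]

theorem skewLeftComm_fin_one (x : Fin 1 → R) : skewLeftComm x = x 0 := by
  simp [skewLeftComm, leftCommFin, leftComm]

theorem skewLeftComm_fin_two (x : Fin 2 → R) :
    skewLeftComm x = 2 • (x 0 * x 1 - x 1 * x 0) := by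
  rw [skewLeftComm_succ, Fin.sum_univ_two]
  simp [skewLeftComm_fin_one, two_mul]

theorem skewLeftComm_fin_three (x : Fin 3 → R) : skewLeftComm x = 0 := by
  rw [skewLeftComm_succ, Fin.sum_univ_three]
  simp only [Nat.reduceAdd, isValue, reduceLast, sign_swap', reduceEq, ↓reduceIte, Units.val_neg,
    Units.val_one, Int.reduceNeg, swap_apply_def, castSucc_eq_zero_iff, skewLeftComm_fin_two,
    one_ne_zero, castSucc_one, nsmul_eq_mul, Nat.cast_ofNat, neg_smul, one_smul, neg_sub,
    castSucc_zero, _root_.zero_ne_one, swap_self, sign_refl, refl_apply]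
  noncomm_ring

theorem skewLeftComm_eq_zero (k : ℕ) (x : Fin (k + 3) → R) : skewLeftComm x = 0 := by
  induction k with
  | zero => exact skewLeftComm_fin_three x
  | succ k ih => simp [skewLeftComm_succ x, ih]

end

/-- In any associative algebra, the full skew-symmetrization of the left-normed
commutator of length `m ≥ 3` vanishes:
`∑_{σ ∈ S_m} sgn(σ) [[…[[x_{σ(1)}, x_{σ(2)}], x_{σ(3)}], …], x_{σ(m)}] = 0`.
(Here `m = k + 3`.) -/
theorem skew_leftComm_assoc_zero
    (R : Type*) [Ring R] (k : ℕ) (x : Fin (k + 3) → R) :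
    ∑ σ : Equiv.Perm (Fin (k + 3)),
      (Equiv.Perm.sign σ : ℤ) •
        leftComm (x (σ 0)) (List.ofFn fun i : Fin (k + 2) => x (σ i.succ)) = 0 :=
  skewLeftComm_eq_zero k x
end
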